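/- Let F be a field that is not the field with 2 elements, and let V ⊆ F^{n×n} and V' ⊆ F^{n'×n'} be linear subspaces of pairwise commuting matrices, each containing a nonsingular matrix. Then the following are equivalent: (i) the Lie algebras L(V) and L(V') are isomorphic; (ii) n = n' and there exists a nonsingular n×n matrix S with SVS^{-1} = V'; (iii) n = n' and there exists a nonsingular (n+1)×(n+1) matrix R with RṼR^{-1} = Ṽ'. -/

import Mathlib

/-- The `(n+1) × (n+1)` matrix `(A|a)` whose top-left `n × n` block is `A`,
whose last column has the entries of the vector `a` followed by `0`, and whose
last row is zero.  Rows and columns are indexed by `Fin n ⊕ Fin 1`. -/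
def Mext {F : Type*} [Field F] {n : ℕ} (A : Matrix (Fin n) (Fin n) F)
    (a : Fin n → F) : Matrix (Fin n ⊕ Fin 1) (Fin n ⊕ Fin 1) F :=
  Matrix.fromBlocks A (Matrix.of fun i _ => a i) 0 0

theorem Mext_add {F : Type*} [Field F] {n : ℕ}
    (A B : Matrix (Fin n) (Fin n) F) (a b : Fin n → F) :
    Mext A a + Mext B b = Mext (A + B) (a + b) := by
  ext (i | i) (j | j) <;>
    simp [Mext, Matrix.fromBlocks, Matrix.add_apply]

theorem Mext_smul {F : Type*} [Field F] {n : ℕ} (c : F)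
    (A : Matrix (Fin n) (Fin n) F) (a : Fin n → F) :
    c • Mext A a = Mext (c • A) (c • a) := by
  ext (i | i) (j | j) <;>
    simp [Mext, Matrix.fromBlocks, Matrix.smul_apply]

theorem Mext_mul {F : Type*} [Field F] {n : ℕ}
    (A B : Matrix (Fin n) (Fin n) F) (a b : Fin n → F) :
    Mext A a * Mext B b = Mext (A * B) (A.mulVec b) := by
  ext (i | i) (j | j) <;>
    simp [Mext, Matrix.mul_apply, Fintype.sum_sum_type,
      Matrix.fromBlocks, Matrix.mulVec, dotProduct]

/-- The set `Ṽ` of all `(n+1) × (n+1)` matrices `(A|a)` with `A ∈ V`,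
`a ∈ Fⁿ`. -/
def VtSet {F : Type*} [Field F] {n : ℕ}
    (V : Submodule F (Matrix (Fin n) (Fin n) F)) :
    Set (Matrix (Fin n ⊕ Fin 1) (Fin n ⊕ Fin 1) F) :=
  {M | ∃ A ∈ V, ∃ a : Fin n → F, M = Mext A a}

attribute [local instance 100] LieRing.ofAssociativeRing

/-- For a subspace `V` of pairwise commuting `n × n` matrices, the Lie algebra
`L(V) = Ṽ` of all matrices `(A|a)` (`A ∈ V`, `a ∈ Fⁿ`), a Lie subalgebra of
the `(n+1) × (n+1)` matrices with the commutator bracket. -/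
def LV {F : Type*} [Field F] {n : ℕ}
    (V : Submodule F (Matrix (Fin n) (Fin n) F))
    (hV : ∀ A ∈ V, ∀ B ∈ V, A * B = B * A) :
    LieSubalgebra F (Matrix (Fin n ⊕ Fin 1) (Fin n ⊕ Fin 1) F) where
  carrier := VtSet V
  add_mem' := by
    rintro x y ⟨A, hA, a, rfl⟩ ⟨B, hB, b, rfl⟩
    exact ⟨A + B, V.add_mem hA hB, a + b, Mext_add A B a b⟩
  zero_mem' := by
    refine ⟨0, V.zero_mem, 0, ?_⟩
    ext (i | i) (j | j) <;> simp [Mext, Matrix.fromBlocks]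
  smul_mem' := by
    rintro c x ⟨A, hA, a, rfl⟩
    exact ⟨c • A, V.smul_mem c hA, c • a, Mext_smul c A a⟩
  lie_mem' := by
    rintro x y ⟨A, hA, a, rfl⟩ ⟨B, hB, b, rfl⟩
    refine ⟨0, V.zero_mem, A.mulVec b - B.mulVec a, ?_⟩
    rw [Ring.lie_def, Mext_mul, Mext_mul, hV A hA B hB]
    ext (i | i) (j | j) <;>
      simp [Mext, Matrix.fromBlocks, Matrix.sub_apply, Pi.sub_apply]

/-
A Lie algebra isomorphism `L(V) ≃ L(V')` must map the ideal of vectors `(0|a)` onto the ideal of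
vectors `(0|a')`: since `V` contains a nonsingular `A₀`, this ideal is the derived algebra, as
`(0|a) = [(A₀|0), (0|A₀⁻¹a)]`. The resulting linear isomorphism `T : Fⁿ ≃ Fⁿ'` intertwines the
actions `[x, (0|b)] = (0|A b)`, so `T` conjugates `V` onto `V'`. Conversely, conjugation by `S`
extends to conjugation by `diag(S, 1)` on the matrices `(A|a)`, and conjugation preserves Lie
brackets.
-/

open Matrix

section Conjugation

variable {R : Type*} [CommRing R]

theorem LinearMap.toMatrix'_mul_mul_inv_of_mulVec {ι : Type*} [Fintype ι] [DecidableEq ι]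
    (T : (ι → R) ≃ₗ[R] (ι → R)) {A B : Matrix ι ι R} (h : ∀ v, T (A *ᵥ v) = B *ᵥ T v) :
    toMatrix' (T : (ι → R) →ₗ[R] (ι → R)) * A * (toMatrix' (T : (ι → R) →ₗ[R] (ι → R)))⁻¹
      = B := by
  set S := toMatrix' (T : (ι → R) →ₗ[R] (ι → R))
  have hS : IsUnit S := by
    rw [LinearMap.isUnit_toMatrix'_iff, Module.End.isUnit_iff]
    exact T.bijective
  have hSA : S * A = B * S := by
    rw [ext_iff_mulVec]
    intro v
    simp only [S, ← mulVec_mulVec, LinearMap.toMatrix'_mulVec, LinearEquiv.coe_coe, h]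
  rw [hSA, mul_nonsing_inv_cancel_right _ _ ((Matrix.isUnit_iff_isUnit_det S).mp hS)]

theorem LieSubalgebra.nonempty_lieEquiv_of_reindex_conj {m m' : Type*} [Fintype m]
    [DecidableEq m] [Fintype m'] [DecidableEq m'] (σ : m ≃ m')
    (L₁ : LieSubalgebra R (Matrix m m R)) (L₂ : LieSubalgebra R (Matrix m' m' R))
    {P : Matrix m' m' R} (hP : IsUnit P)
    (h : (fun X => P * reindex σ σ X * P⁻¹) '' L₁ = L₂) : Nonempty (L₁ ≃ₗ⁅R⁆ L₂) := by
  let := hP.invertible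
  refine ⟨LieEquiv.ofSubalgebras _ _ ((reindexLieEquiv σ).trans (P.lieConj this)) ?_⟩
  rw [← LieSubalgebra.coe_set_eq, ← h]
  ext X
  simp [LieSubalgebra.mem_map, lieConj_apply]

end Conjugation

section Mext

variable {F : Type*} [Field F] {n : ℕ}

theorem Mext_lie_Mext (A B : Matrix (Fin n) (Fin n) F) (a b : Fin n → F) :
    ⁅Mext A a, Mext B b⁆ = Mext (A * B - B * A) (A *ᵥ b - B *ᵥ a) := by
  rw [Ring.lie_def, Mext_mul, Mext_mul]
  ext (i | i) (j | j) <;> simp [Mext]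

theorem fromBlocks_one_mul_Mext_mul_inv {S : Matrix (Fin n) (Fin n) F} (hS : IsUnit S)
    (A : Matrix (Fin n) (Fin n) F) (a : Fin n → F) :
    fromBlocks S 0 0 (1 : Matrix (Fin 1) (Fin 1) F) * Mext A a * (fromBlocks S 0 0 1)⁻¹
      = Mext (S * A * S⁻¹) (S *ᵥ a) := by
  have hdet := (Matrix.isUnit_iff_isUnit_det S).mp hS
  have hinv : (fromBlocks S 0 0 (1 : Matrix (Fin 1) (Fin 1) F))⁻¹ = fromBlocks S⁻¹ 0 0 1 :=
    inv_eq_right_inv <| by simp [fromBlocks_multiply, mul_nonsing_inv _ hdet, fromBlocks_one]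
  rw [hinv, Mext, Mext, fromBlocks_multiply, fromBlocks_multiply]
  ext (i | i) (j | j) <;> simp [mul_apply, mulVec, dotProduct]

end Mext

namespace LV

variable {F : Type*} [Field F] {n n' : ℕ}
  {V : Submodule F (Matrix (Fin n) (Fin n) F)} {hV : ∀ A ∈ V, ∀ B ∈ V, A * B = B * A}
  {V' : Submodule F (Matrix (Fin n') (Fin n') F)} {hV' : ∀ A ∈ V', ∀ B ∈ V', A * B = B * A}

def matPart (x : LV V hV) : Matrix (Fin n) (Fin n) F :=
  (x : Matrix (Fin n ⊕ Fin 1) (Fin n ⊕ Fin 1) F).toBlocks₁₁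

def vecPart : LV V hV →ₗ[F] (Fin n → F) where
  toFun x i := (x : Matrix (Fin n ⊕ Fin 1) (Fin n ⊕ Fin 1) F) (Sum.inl i) (Sum.inr 0)
  map_add' _ _ := rfl
  map_smul' _ _ := rfl

variable (V hV) in
def vec : (Fin n → F) →ₗ[F] LV V hV where
  toFun a := ⟨Mext 0 a, 0, V.zero_mem, a, rfl⟩
  map_add' a b := Subtype.ext <| by simp [Mext_add]
  map_smul' c a := Subtype.ext <| by simp [Mext_smul]

def ofMat {A : Matrix (Fin n) (Fin n) F} (hA : A ∈ V) : LV V hV := ⟨Mext A 0, A, hA, 0, rfl⟩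

@[simp] theorem vecPart_vec (a : Fin n → F) : vecPart (vec V hV a) = a := rfl

@[simp] theorem matPart_vec (a : Fin n → F) : matPart (vec V hV a) = 0 := rfl

@[simp] theorem matPart_ofMat {A : Matrix (Fin n) (Fin n) F} (hA : A ∈ V) :
    matPart (ofMat hA : LV V hV) = A := rfl

theorem vec_injective : Function.Injective (vec V hV) :=
  Function.LeftInverse.injective (g := vecPart) vecPart_vec

theorem matPart_mem (x : LV V hV) : matPart x ∈ V := by
  obtain ⟨A, hA, a, hx⟩ := x.2
  simpa [matPart, hx, Mext] using hA

theorem coe_eq_Mext (x : LV V hV) :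
    (x : Matrix (Fin n ⊕ Fin 1) (Fin n ⊕ Fin 1) F) = Mext (matPart x) (vecPart x) := by
  obtain ⟨A, -, a, hx⟩ := x.2
  ext (i | i) (j | j) <;> simp [Mext, matPart, vecPart, hx, Fin.fin_one_eq_zero]

theorem lie_eq_vec (x y : LV V hV) :
    ⁅x, y⁆ = vec V hV (matPart x *ᵥ vecPart y - matPart y *ᵥ vecPart x) := by
  apply Subtype.ext
  rw [LieSubalgebra.coe_bracket, coe_eq_Mext x, coe_eq_Mext y, Mext_lie_Mext,
    hV _ (matPart_mem x) _ (matPart_mem y), sub_self]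
  rfl

theorem lie_vec (x : LV V hV) (b : Fin n → F) : ⁅x, vec V hV b⁆ = vec V hV (matPart x *ᵥ b) := by
  rw [lie_eq_vec, vecPart_vec, matPart_vec, zero_mulVec, sub_zero]

theorem exists_lie_eq_vec (hns : ∃ A ∈ V, IsUnit A) (a : Fin n → F) :
    ∃ x y : LV V hV, ⁅x, y⁆ = vec V hV a := by
  obtain ⟨A, hA, hunit⟩ := hns
  refine ⟨ofMat hA, vec V hV (A⁻¹ *ᵥ a), ?_⟩
  rw [lie_vec, matPart_ofMat, mulVec_mulVec,
    mul_nonsing_inv _ ((Matrix.isUnit_iff_isUnit_det A).mp hunit), one_mulVec]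

theorem vec_vecPart_lie (x y : LV V hV) : vec V hV (vecPart ⁅x, y⁆) = ⁅x, y⁆ := by
  rw [lie_eq_vec x y, vecPart_vec]

theorem vec_vecPart_map_vec (e : LV V hV ≃ₗ⁅F⁆ LV V' hV') (hns : ∃ A ∈ V, IsUnit A)
    (a : Fin n → F) : vec V' hV' (vecPart (e (vec V hV a))) = e (vec V hV a) := by
  obtain ⟨x, y, hxy⟩ := exists_lie_eq_vec hns a
  rw [← hxy, LieEquiv.map_lie, vec_vecPart_lie]

def vecEquiv (e : LV V hV ≃ₗ⁅F⁆ LV V' hV') (hns : ∃ A ∈ V, IsUnit A)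
    (hns' : ∃ A ∈ V', IsUnit A) : (Fin n → F) ≃ₗ[F] (Fin n' → F) :=
  LinearEquiv.ofLinearMap (vecPart ∘ₗ e.toLinearEquiv.toLinearMap ∘ₗ vec V hV)
    (vecPart ∘ₗ e.symm.toLinearEquiv.toLinearMap ∘ₗ vec V' hV')
    (LinearMap.ext fun b => by
      simp [vec_vecPart_map_vec e.symm hns'])
    (LinearMap.ext fun a => by
      simp [vec_vecPart_map_vec e hns])

theorem vec_vecEquiv (e : LV V hV ≃ₗ⁅F⁆ LV V' hV') (hns : ∃ A ∈ V, IsUnit A)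
    (hns' : ∃ A ∈ V', IsUnit A) (a : Fin n → F) :
    vec V' hV' (vecEquiv e hns hns' a) = e (vec V hV a) :=
  vec_vecPart_map_vec e hns a

theorem vecEquiv_matPart_mulVec (e : LV V hV ≃ₗ⁅F⁆ LV V' hV') (hns : ∃ A ∈ V, IsUnit A)
    (hns' : ∃ A ∈ V', IsUnit A) (x : LV V hV) (b : Fin n → F) :
    vecEquiv e hns hns' (matPart x *ᵥ b) = matPart (e x) *ᵥ vecEquiv e hns hns' b := by
  apply vec_injective (hV := hV')
  calc vec V' hV' (vecEquiv e hns hns' (matPart x *ᵥ b))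
      = e ⁅x, vec V hV b⁆ := by rw [vec_vecEquiv, lie_vec]
    _ = ⁅e x, vec V' hV' (vecEquiv e hns hns' b)⁆ := by rw [LieEquiv.map_lie, vec_vecEquiv]
    _ = vec V' hV' (matPart (e x) *ᵥ vecEquiv e hns hns' b) := lie_vec _ _

theorem exists_conj_eq_of_lieEquiv {V' : Submodule F (Matrix (Fin n) (Fin n) F)}
    {hV' : ∀ A ∈ V', ∀ B ∈ V', A * B = B * A} (e : LV V hV ≃ₗ⁅F⁆ LV V' hV')
    (hns : ∃ A ∈ V, IsUnit A) (hns' : ∃ A ∈ V', IsUnit A) :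
    ∃ S : Matrix (Fin n) (Fin n) F, IsUnit S ∧ (fun A => S * A * S⁻¹) '' ↑V = ↑V' := by
  set T := vecEquiv e hns hns'
  set S := LinearMap.toMatrix' (T : (Fin n → F) →ₗ[F] (Fin n → F))
  have hconj (x : LV V hV) : S * matPart x * S⁻¹ = matPart (e x) :=
    LinearMap.toMatrix'_mul_mul_inv_of_mulVec T (vecEquiv_matPart_mulVec e hns hns' x)
  refine ⟨S, ?_, ?_⟩
  · rw [LinearMap.isUnit_toMatrix'_iff, Module.End.isUnit_iff]
    exact T.bijective
  ext B
  constructor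
  · rintro ⟨A, hA, rfl⟩
    dsimp only
    rw [SetLike.mem_coe, ← matPart_ofMat (hV := hV) hA, hconj]
    exact matPart_mem _
  · intro hB
    refine ⟨matPart (e.symm (ofMat hB)), matPart_mem _, ?_⟩
    simp [hconj]

theorem similar_of_lieEquiv (e : LV V hV ≃ₗ⁅F⁆ LV V' hV') (hns : ∃ A ∈ V, IsUnit A) (hns' : ∃ A ∈ V', IsUnit A) :
    ∃ h : n = n', ∃ S : Matrix (Fin n') (Fin n') F, IsUnit S ∧
      (fun A => S * (reindex (finCongr h) (finCongr h) A) * S⁻¹) '' ↑V = ↑V' := by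
  obtain rfl : n = n' := by simpa using (vecEquiv e hns hns').finrank_eq
  simpa using exists_conj_eq_of_lieEquiv e hns hns'

end LV

section Similarity

variable {F : Type*} [Field F] {n n' : ℕ}
  {V : Submodule F (Matrix (Fin n) (Fin n) F)} {V' : Submodule F (Matrix (Fin n') (Fin n') F)}

theorem VtSet_similar_of_similar
    (hsim : ∃ h : n = n', ∃ S : Matrix (Fin n') (Fin n') F, IsUnit S ∧
      (fun A => S * (reindex (finCongr h) (finCongr h) A) * S⁻¹) '' ↑V = ↑V') :
    ∃ h : n = n', ∃ R : Matrix (Fin n' ⊕ Fin 1) (Fin n' ⊕ Fin 1) F, IsUnit R ∧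
      (fun X => R * (reindex (Equiv.sumCongr (finCongr h) (Equiv.refl (Fin 1)))
        (Equiv.sumCongr (finCongr h) (Equiv.refl (Fin 1))) X) * R⁻¹) '' VtSet V = VtSet V' := by
  obtain ⟨rfl, S, hS, hSV⟩ := hsim
  simp only [finCongr_refl, reindex_refl_refl] at hSV
  refine ⟨rfl, fromBlocks S 0 0 1, ?_, ?_⟩
  · rw [Matrix.isUnit_iff_isUnit_det, det_fromBlocks_zero₂₁, det_one, mul_one]
    exact (Matrix.isUnit_iff_isUnit_det S).mp hS
  simp only [finCongr_refl, Equiv.sumCongr_refl, reindex_refl_refl]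
  ext Y
  constructor
  · rintro ⟨_, ⟨A, hA, a, rfl⟩, rfl⟩
    refine ⟨S * A * S⁻¹, ?_, S *ᵥ a, fromBlocks_one_mul_Mext_mul_inv hS A a⟩
    rw [← SetLike.mem_coe, ← hSV]
    exact ⟨A, hA, rfl⟩
  · rintro ⟨_, hB, b, rfl⟩
    rw [← SetLike.mem_coe, ← hSV] at hB
    obtain ⟨A, hA, rfl⟩ := hB
    refine ⟨Mext A (S⁻¹ *ᵥ b), ⟨A, hA, _, rfl⟩, ?_⟩
    dsimp only
    rw [fromBlocks_one_mul_Mext_mul_inv hS, mulVec_mulVec,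
      mul_nonsing_inv _ ((Matrix.isUnit_iff_isUnit_det S).mp hS), one_mulVec]

theorem LV.nonempty_lieEquiv_of_VtSet_similar {hV : ∀ A ∈ V, ∀ B ∈ V, A * B = B * A}
    {hV' : ∀ A ∈ V', ∀ B ∈ V', A * B = B * A}
    (hsim : ∃ h : n = n', ∃ R : Matrix (Fin n' ⊕ Fin 1) (Fin n' ⊕ Fin 1) F, IsUnit R ∧
      (fun X => R * (reindex (Equiv.sumCongr (finCongr h) (Equiv.refl (Fin 1)))
        (Equiv.sumCongr (finCongr h) (Equiv.refl (Fin 1))) X) * R⁻¹) '' VtSet V = VtSet V') :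
    Nonempty (LV V hV ≃ₗ⁅F⁆ LV V' hV') :=
  let ⟨_, _, hR, hRV⟩ := hsim
  LieSubalgebra.nonempty_lieEquiv_of_reindex_conj _ _ _ hR hRV

end Similarity

theorem LV_iso_iff_similar_iff_Vt_similar_general (F : Type*) [Field F]
    (n n' : ℕ)
    (V : Submodule F (Matrix (Fin n) (Fin n) F))
    (V' : Submodule F (Matrix (Fin n') (Fin n') F))
    (hV : ∀ A ∈ V, ∀ B ∈ V, A * B = B * A)
    (hV' : ∀ A ∈ V', ∀ B ∈ V', A * B = B * A)
    (hns : ∃ A ∈ V, IsUnit A) (hns' : ∃ A ∈ V', IsUnit A) :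
    (Nonempty ((LV V hV) ≃ₗ⁅F⁆ (LV V' hV')) ↔
      (∃ h : n = n', ∃ S : Matrix (Fin n') (Fin n') F, IsUnit S ∧
        (fun A => S * (Matrix.reindex (finCongr h) (finCongr h) A) * S⁻¹) '' ↑V
          = (↑V' : Set (Matrix (Fin n') (Fin n') F)))) ∧
    ((∃ h : n = n', ∃ S : Matrix (Fin n') (Fin n') F, IsUnit S ∧
        (fun A => S * (Matrix.reindex (finCongr h) (finCongr h) A) * S⁻¹) '' ↑V
          = (↑V' : Set (Matrix (Fin n') (Fin n') F))) ↔
      (∃ h : n = n', ∃ R : Matrix (Fin n' ⊕ Fin 1) (Fin n' ⊕ Fin 1) F,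
        IsUnit R ∧
        (fun X => R *
            (Matrix.reindex (Equiv.sumCongr (finCongr h) (Equiv.refl (Fin 1)))
              (Equiv.sumCongr (finCongr h) (Equiv.refl (Fin 1))) X) * R⁻¹) ''
          VtSet V = VtSet V')) := by
  have i_of_iii := LV.nonempty_lieEquiv_of_VtSet_similar (hV := hV) (hV' := hV')
  have ii_of_i := fun e : LV V hV ≃ₗ⁅F⁆ LV V' hV' => LV.similar_of_lieEquiv e hns hns'
  exact ⟨⟨fun ⟨e⟩ => ii_of_i e, fun h => i_of_iii (VtSet_similar_of_similar h)⟩,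
    VtSet_similar_of_similar, fun h => ii_of_i (i_of_iii h).some⟩

/-- For a field `F` with more than `2` elements and subspaces `V ⊆ Fⁿˣⁿ`,
`V' ⊆ Fⁿ'ˣⁿ'` of pairwise commuting matrices containing nonsingular matrices,
the following are equivalent: (i) the Lie algebras `L(V)` and `L(V')` are
isomorphic; (ii) `n = n'` and `SVS⁻¹ = V'` for some nonsingular `S`;
(iii) `n = n'` and `RṼR⁻¹ = Ṽ'` for some nonsingular `(n+1) × (n+1)`
matrix `R`. -/
theorem LV_iso_iff_similar_iff_Vt_similar (F : Type*) [Field F]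
    (hF : ∃ x y z : F, x ≠ y ∧ x ≠ z ∧ y ≠ z) (n n' : ℕ)
    (V : Submodule F (Matrix (Fin n) (Fin n) F))
    (V' : Submodule F (Matrix (Fin n') (Fin n') F))
    (hV : ∀ A ∈ V, ∀ B ∈ V, A * B = B * A)
    (hV' : ∀ A ∈ V', ∀ B ∈ V', A * B = B * A)
    (hns : ∃ A ∈ V, IsUnit A) (hns' : ∃ A ∈ V', IsUnit A) :
    (Nonempty ((LV V hV) ≃ₗ⁅F⁆ (LV V' hV')) ↔
      (∃ h : n = n', ∃ S : Matrix (Fin n') (Fin n') F, IsUnit S ∧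
        (fun A => S * (Matrix.reindex (finCongr h) (finCongr h) A) * S⁻¹) '' ↑V
          = (↑V' : Set (Matrix (Fin n') (Fin n') F)))) ∧
    ((∃ h : n = n', ∃ S : Matrix (Fin n') (Fin n') F, IsUnit S ∧
        (fun A => S * (Matrix.reindex (finCongr h) (finCongr h) A) * S⁻¹) '' ↑V
          = (↑V' : Set (Matrix (Fin n') (Fin n') F))) ↔
      (∃ h : n = n', ∃ R : Matrix (Fin n' ⊕ Fin 1) (Fin n' ⊕ Fin 1) F,
        IsUnit R ∧
        (fun X => R *
            (Matrix.reindex (Equiv.sumCongr (finCongr h) (Equiv.refl (Fin 1)))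
              (Equiv.sumCongr (finCongr h) (Equiv.refl (Fin 1))) X) * R⁻¹) ''
          VtSet V = VtSet V')) :=
  LV_iso_iff_similar_iff_Vt_similar_general F n n' V V' hV hV' hns hns'
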